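/- arXiv:2604.19889 — 6 statements merged into one kernel-verified Lean document; each statement's English description precedes it below -/
import Mathlib

section
/- For every choice of real coefficients h¹_a, h²_a (a ∈ {x,y,z}) and J_{a,b} (a,b ∈ {x,y,z}), let H := Σ_a h¹_a (σ_a ⊗ 1) + Σ_a h²_a (1 ⊗ σ_a) + Σ_{a,b} J_{a,b} (σ_a ⊗ σ_b). Then there exists a finite γ_c ≥ 0 such that for every γ ≥ γ_c there is a real matrix M indexed by the 36 two-qubit configurations with M_{C,C'} ≥ 0 for all C ≠ C', Σ_C M_{C,C'} = 0 for every C', and for every configuration C: i(H·P_C − P_C·H) + γ·(Σ_a 𝒟[σ_a⊗1](P_C) + Σ_a 𝒟[1⊗σ_a](P_C) + Σ_{a,b} 𝒟[σ_a⊗σ_b](P_C)) = Σ_{C'} M_{C,C'} • P_{C'}. -/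
open Matrix Kronecker Finset
open scoped Classical

noncomputable section

/-- The Pauli matrices σ_x, σ_y, σ_z, indexed by `0, 1, 2 : Fin 3`. -/
def σp : Fin 3 → Matrix (Fin 2) (Fin 2) ℂ :=
  ![!![0, 1; 1, 0], !![0, -Complex.I; Complex.I, 0], !![1, 0; 0, -1]]

/-- The sign values `+1, −1`, indexed by `Fin 2`. -/
def sgn : Fin 2 → ℝ := ![1, -1]

/-- The spin projector `P_{s,α} = (1/2)(1 + s • σ_α)`. -/
def Pspin (s : ℝ) (α : Fin 3) : Matrix (Fin 2) (Fin 2) ℂ :=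
  (2 : ℂ)⁻¹ • (1 + (s : ℂ) • σp α)

/-- A single-qubit classical configuration: a sign and an axis. -/
abbrev Conf1 := Fin 2 × Fin 3

/-- The projector attached to a single-qubit configuration. -/
def Pc (c : Conf1) : Matrix (Fin 2) (Fin 2) ℂ := Pspin (sgn c.1) c.2

/-- A two-qubit classical configuration. -/
abbrev Conf2 := Conf1 × Conf1

/-- The projector attached to a two-qubit configuration (Kronecker product). -/
def Pc2 (C : Conf2) : Matrix (Fin 2 × Fin 2) (Fin 2 × Fin 2) ℂ :=
  Pc C.1 ⊗ₖ Pc C.2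

/-- Dual dissipative channel `𝒟[A](X) = A† X A − (1/2)(A†A X + X A†A)`. -/
def Dcal {n : Type*} [Fintype n] (A X : Matrix n n ℂ) : Matrix n n ℂ :=
  Aᴴ * X * A - (2 : ℂ)⁻¹ • (Aᴴ * A * X + X * (Aᴴ * A))

/-!
The commutator `i[H, P_C]` is Hermitian, and the 36 projectors span the Hermitian `4 × 4`
matrices over `ℝ`: their complex span is everything, since already the one-qubit projectors
give `1` and the Pauli matrices. Hence `i[H, P_C] = ∑ r_{C,C'} P_{C'}`, and because
`∑_C P_C = 9` is central the commutators sum to zero, which allows `r` with vanishing column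
sums. Each jump operator is a Hermitian involution, and the Pauli twirl
`∑_a σ_a Y σ_a = 2 tr Y - Y` on each factor shows that the noise acts as
`P_C ↦ 4 - 16 P_C = ∑ G_{C,C'} P_{C'}` with `G_{C,C'} = 4/9 - 16 δ_{CC'}`, a rate matrix with
positive off-diagonal entries and zero column sums. For large `γ`, `M = r + γ G` works.
-/

namespace Matrix

variable {R l m n p ι : Type*}

theorem sum_kronecker [NonUnitalNonAssocSemiring R] (s : Finset ι) (A : ι → Matrix l m R)
    (B : Matrix n p R) : (∑ i ∈ s, A i) ⊗ₖ B = ∑ i ∈ s, A i ⊗ₖ B := by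
  ext ⟨i, i'⟩ ⟨j, j'⟩
  simp [Matrix.sum_apply, Finset.sum_mul]

theorem kronecker_sum [NonUnitalNonAssocSemiring R] (s : Finset ι) (A : Matrix l m R)
    (B : ι → Matrix n p R) : A ⊗ₖ (∑ i ∈ s, B i) = ∑ i ∈ s, A ⊗ₖ B i := by
  ext ⟨i, i'⟩ ⟨j, j'⟩
  simp [Matrix.sum_apply, Finset.mul_sum]

theorem sub_kronecker [NonUnitalNonAssocRing R] (A₁ A₂ : Matrix l m R) (B : Matrix n p R) :
    (A₁ - A₂) ⊗ₖ B = A₁ ⊗ₖ B - A₂ ⊗ₖ B := by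
  ext ⟨i, i'⟩ ⟨j, j'⟩
  simp [sub_mul]

theorem kronecker_sub [NonUnitalNonAssocRing R] (A : Matrix l m R) (B₁ B₂ : Matrix n p R) :
    A ⊗ₖ (B₁ - B₂) = A ⊗ₖ B₁ - A ⊗ₖ B₂ := by
  ext ⟨i, i'⟩ ⟨j, j'⟩
  simp [mul_sub]

theorem IsHermitian.kronecker [CommRing R] [StarRing R] {A : Matrix m m R} {B : Matrix n n R}
    (hA : A.IsHermitian) (hB : B.IsHermitian) : (A ⊗ₖ B).IsHermitian := by
  rw [IsHermitian, conjTranspose_kronecker, hA, hB]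

theorem kronecker_mul_kronecker_mul_kronecker [CommRing R] [Fintype m] [Fintype n]
    (A X : Matrix m m R) (B Y : Matrix n n R) :
    (A ⊗ₖ B) * (X ⊗ₖ Y) * (A ⊗ₖ B) = (A * X * A) ⊗ₖ (B * Y * B) := by
  rw [← mul_kronecker_mul, ← mul_kronecker_mul]

theorem kronecker_mul_self_eq_one [CommRing R] [Fintype m] [Fintype n] [DecidableEq m]
    [DecidableEq n] {A : Matrix m m R} {B : Matrix n n R} (hA : A * A = 1) (hB : B * B = 1) :
    (A ⊗ₖ B) * (A ⊗ₖ B) = 1 := by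
  rw [← mul_kronecker_mul, hA, hB, one_kronecker_one]

theorem span_image2_kronecker_eq_top [CommRing R] [Fintype l] [Fintype m] [Fintype n]
    [Fintype p] [DecidableEq l] [DecidableEq m] [DecidableEq n] [DecidableEq p]
    {S : Set (Matrix l m R)} {T : Set (Matrix n p R)}
    (hS : Submodule.span R S = ⊤) (hT : Submodule.span R T = ⊤) :
    Submodule.span R (Set.image2 (· ⊗ₖ ·) S T) = ⊤ := by
  have hmap := Submodule.map₂_span_span R (kroneckerBilinear (R := R) (α := R)) S T
  rw [hS, hT] at hmap
  refine Submodule.eq_top_iff'.2 fun X => ?_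
  rw [matrix_eq_sum_single X]
  refine Submodule.sum_mem _ fun ⟨i, k⟩ _ => Submodule.sum_mem _ fun ⟨j, l⟩ _ => ?_
  rw [← mul_one (X _ _), ← single_kronecker_single]
  exact hmap ▸ Submodule.apply_mem_map₂ _ Submodule.mem_top Submodule.mem_top

theorem IsHermitian.mem_span_real [Fintype n] [Fintype ι] {B : ι → Matrix n n ℂ}
    (hB : ∀ i, (B i).IsHermitian) (hspan : Submodule.span ℂ (Set.range B) = ⊤)
    {X : Matrix n n ℂ} (hX : X.IsHermitian) : X ∈ Submodule.span ℝ (Set.range B) := by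
  have hXmem : X ∈ Submodule.span ℂ (Set.range B) := hspan ▸ Submodule.mem_top
  obtain ⟨c, hc⟩ := (Submodule.mem_span_range_iff_exists_fun ℂ).1 hXmem
  have hstar : ∑ i, star (c i) • B i = X := by
    rw [← hX.eq, ← hc, conjTranspose_sum]
    simp only [conjTranspose_smul, (hB _).eq]
  refine (Submodule.mem_span_range_iff_exists_fun ℝ).2 ⟨fun i => (c i).re, ?_⟩
  -- `re c = (c + conj c) / 2`, so the real coefficients give `(X + Xᴴ) / 2 = X`
  calc ∑ i, (c i).re • B i = ∑ i, (2⁻¹ : ℂ) • (c i • B i + star (c i) • B i) := by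
        refine Finset.sum_congr rfl fun i _ => ?_
        rw [← Complex.coe_smul, Complex.re_eq_add_conj, ← add_smul, smul_smul, div_eq_inv_mul]
        rfl
    _ = X := by
        rw [← Finset.smul_sum, Finset.sum_add_distrib, hc, hstar, ← two_smul ℂ X, smul_smul]
        norm_num

theorem isHermitian_I_smul_commutator [Fintype n] {A B : Matrix n n ℂ}
    (hA : A.IsHermitian) (hB : B.IsHermitian) : (Complex.I • (A * B - B * A)).IsHermitian := by
  rw [IsHermitian, conjTranspose_smul, conjTranspose_sub, conjTranspose_mul, conjTranspose_mul,
    hA.eq, hB.eq, Complex.star_def, Complex.conj_I, neg_smul, ← smul_neg, neg_sub]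

end Matrix

section RateMatrix

variable {ι V : Type*} [Fintype ι] [AddCommGroup V] [Module ℝ V]

theorem exists_coeffs_sum_eq_zero_of_sum_eq_zero [Nonempty ι] {P L : ι → V}
    (hL : ∀ i, L i ∈ Submodule.span ℝ (Set.range P)) (hLsum : ∑ i, L i = 0) :
    ∃ r : ι → ι → ℝ, (∀ j, ∑ i, r i j = 0) ∧ ∀ i, L i = ∑ j, r i j • P j := by
  choose c hc using fun i => (Submodule.mem_span_range_iff_exists_fun ℝ).1 (hL i)
  set v : ι → ℝ := fun j => ∑ i, c i j
  have hv : ∑ j, v j • P j = 0 := by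
    simp only [v, Finset.sum_smul]
    rw [Finset.sum_comm]
    simp only [hc, hLsum]
  -- subtracting the column averages `v j / |ι|` costs only `(∑ j, v j • P j) / |ι| = 0`
  have hn : (Fintype.card ι : ℝ) ≠ 0 := Nat.cast_ne_zero.2 Fintype.card_ne_zero
  refine ⟨fun i j => c i j - v j / Fintype.card ι, fun j => ?_, fun i => ?_⟩
  · rw [Finset.sum_sub_distrib, Finset.sum_const, Finset.card_univ, nsmul_eq_mul]
    field_simp
    simp [v]
  · simp only [sub_smul, Finset.sum_sub_distrib, div_eq_mul_inv, mul_comm _ (_ : ℝ)⁻¹, mul_smul,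
      ← Finset.smul_sum, hv, smul_zero, sub_zero, hc]

theorem eventually_offDiag_nonneg_add_mul (r G : ι → ι → ℝ) (hG : ∀ i j, i ≠ j → 0 < G i j) :
    ∀ᶠ γ in Filter.atTop, ∀ i j, i ≠ j → 0 ≤ r i j + γ * G i j := by
  refine Filter.eventually_all.2 fun i => Filter.eventually_all.2 fun j => ?_
  by_cases hij : i = j
  · exact Filter.Eventually.of_forall fun _ h => absurd hij h
  have htends : Filter.Tendsto (fun γ => r i j + γ * G i j) Filter.atTop Filter.atTop :=
    Filter.tendsto_atTop_add_const_left _ _ (Filter.tendsto_id.atTop_mul_const (hG i j hij))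
  exact (htends.eventually_ge_atTop 0).mono fun _ h _ => h

theorem exists_rate_matrix [Nonempty ι] {P L : ι → V} {G : ι → ι → ℝ}
    (hL : ∀ i, L i ∈ Submodule.span ℝ (Set.range P)) (hLsum : ∑ i, L i = 0)
    (hGpos : ∀ i j, i ≠ j → 0 < G i j) (hGsum : ∀ j, ∑ i, G i j = 0) :
    ∃ γc : ℝ, 0 ≤ γc ∧ ∀ γ : ℝ, γc ≤ γ → ∃ M : ι → ι → ℝ,
      (∀ i j, i ≠ j → 0 ≤ M i j) ∧ (∀ j, ∑ i, M i j = 0) ∧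
      ∀ i, L i + γ • ∑ j, G i j • P j = ∑ j, M i j • P j := by
  obtain ⟨r, hrsum, hr⟩ := exists_coeffs_sum_eq_zero_of_sum_eq_zero hL hLsum
  obtain ⟨γ₀, hγ₀⟩ := Filter.eventually_atTop.1 (eventually_offDiag_nonneg_add_mul r G hGpos)
  refine ⟨max γ₀ 0, le_max_right _ _, fun γ hγ => ⟨fun i j => r i j + γ * G i j,
    hγ₀ γ (le_of_max_le_left hγ), fun j => ?_, fun i => ?_⟩⟩
  · rw [Finset.sum_add_distrib, ← Finset.mul_sum, hrsum, hGsum, mul_zero, add_zero]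
  · simp only [hr i, add_smul, Finset.sum_add_distrib, Finset.smul_sum, mul_smul]

end RateMatrix

theorem Dcal_of_isHermitian_of_mul_self {n : Type*} [Fintype n] [DecidableEq n]
    {A : Matrix n n ℂ} (hA : A.IsHermitian) (hA2 : A * A = 1) (X : Matrix n n ℂ) :
    Dcal A X = A * X * A - X := by
  rw [Dcal, hA.eq, hA2, Matrix.one_mul, Matrix.mul_one, ← two_smul ℂ X, smul_smul]
  norm_num

theorem σp_isHermitian (a : Fin 3) : (σp a).IsHermitian := by
  fin_cases a <;> ext i j <;> fin_cases i <;> fin_cases j <;> simp [σp, conjTranspose_apply]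

theorem σp_mul_self (a : Fin 3) : σp a * σp a = 1 := by
  fin_cases a <;> ext i j <;> fin_cases i <;> fin_cases j <;>
    simp [σp, mul_apply, Fin.sum_univ_succ]

theorem trace_σp (a : Fin 3) : (σp a).trace = 0 := by
  fin_cases a <;> simp [σp, trace, Fin.sum_univ_succ]

theorem eq_pauli_expansion (Y : Matrix (Fin 2) (Fin 2) ℂ) :
    Y = (Y.trace / 2) • 1 + ∑ a, ((σp a * Y).trace / 2) • σp a := by
  ext i j; fin_cases i <;> fin_cases j <;>
    simp [σp, trace, mul_apply, Fin.sum_univ_succ] <;> ring_nf <;> rw [Complex.I_sq] <;> ring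

theorem sum_σp_mul_mul_σp (Y : Matrix (Fin 2) (Fin 2) ℂ) :
    ∑ a, σp a * Y * σp a = (2 * Y.trace) • 1 - Y := by
  ext i j; fin_cases i <;> fin_cases j <;>
    simp [σp, trace, mul_apply, vecMul, dotProduct, Fin.sum_univ_succ] <;> ring_nf <;>
    rw [Complex.I_sq] <;> ring

theorem Pc_add_Pc (a : Fin 3) : Pc (0, a) + Pc (1, a) = 1 := by
  simp [Pc, Pspin, sgn]
  module

theorem Pc_sub_Pc (a : Fin 3) : Pc (0, a) - Pc (1, a) = σp a := by
  simp [Pc, Pspin, sgn]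
  module

theorem Pc_isHermitian (c : Conf1) : (Pc c).IsHermitian :=
  (isHermitian_one.add ((σp_isHermitian _).smul (Complex.conj_ofReal _))).smul (by simp)

theorem trace_Pc (c : Conf1) : (Pc c).trace = 1 := by
  simp [Pc, Pspin, trace_σp]

theorem sum_Pc : ∑ c : Conf1, Pc c = (3 : ℂ) • 1 := by
  simp only [Fintype.sum_prod_type_right, Fin.sum_univ_two, Pc_add_Pc, Finset.sum_const,
    Finset.card_univ, Fintype.card_fin, ← Nat.cast_smul_eq_nsmul ℂ]
  norm_num

theorem span_range_Pc_eq_top : Submodule.span ℂ (Set.range Pc) = ⊤ := by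
  have hmem : ∀ c, Pc c ∈ Submodule.span ℂ (Set.range Pc) :=
    fun c => Submodule.subset_span ⟨c, rfl⟩
  refine Submodule.eq_top_iff'.2 fun Y => ?_
  rw [eq_pauli_expansion Y, ← Pc_add_Pc 0]
  refine add_mem (Submodule.smul_mem _ _ (add_mem (hmem _) (hmem _)))
    (Submodule.sum_mem _ fun a _ => Submodule.smul_mem _ _ ?_)
  rw [← Pc_sub_Pc]
  exact sub_mem (hmem _) (hmem _)

theorem Pc2_isHermitian (C : Conf2) : (Pc2 C).IsHermitian :=
  (Pc_isHermitian _).kronecker (Pc_isHermitian _)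

theorem sum_Pc2 : ∑ C : Conf2, Pc2 C = (9 : ℂ) • 1 := by
  rw [Fintype.sum_prod_type]
  simp only [Pc2, ← kronecker_sum, ← sum_kronecker]
  rw [sum_Pc, smul_kronecker, kronecker_smul, one_kronecker_one, smul_smul]
  norm_num

theorem span_range_Pc2_eq_top : Submodule.span ℂ (Set.range Pc2) = ⊤ := by
  rw [show Set.range Pc2 = Set.image2 (· ⊗ₖ ·) (Set.range Pc) (Set.range Pc) from
    (Set.image2_range _ _ _).symm]
  exact span_image2_kronecker_eq_top span_range_Pc_eq_top span_range_Pc_eq_top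

theorem dissipator_kronecker (p q : Matrix (Fin 2) (Fin 2) ℂ) :
    ∑ a, Dcal (σp a ⊗ₖ (1 : Matrix (Fin 2) (Fin 2) ℂ)) (p ⊗ₖ q)
      + ∑ a, Dcal ((1 : Matrix (Fin 2) (Fin 2) ℂ) ⊗ₖ σp a) (p ⊗ₖ q)
      + ∑ a, ∑ b, Dcal (σp a ⊗ₖ σp b) (p ⊗ₖ q)
      = (4 * (p.trace * q.trace)) • 1 - (16 : ℂ) • (p ⊗ₖ q) := by
  have hD : ∀ A B : Matrix (Fin 2) (Fin 2) ℂ, A.IsHermitian → B.IsHermitian → A * A = 1 →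
      B * B = 1 → Dcal (A ⊗ₖ B) (p ⊗ₖ q) = (A * p * A) ⊗ₖ (B * q * B) - p ⊗ₖ q := by
    intro A B hA hB hA2 hB2
    rw [Dcal_of_isHermitian_of_mul_self (hA.kronecker hB) (kronecker_mul_self_eq_one hA2 hB2),
      kronecker_mul_kronecker_mul_kronecker]
  simp only [hD _ _ (σp_isHermitian _) isHermitian_one (σp_mul_self _) (mul_one 1),
    hD _ _ isHermitian_one (σp_isHermitian _) (mul_one 1) (σp_mul_self _),
    hD _ _ (σp_isHermitian _) (σp_isHermitian _) (σp_mul_self _) (σp_mul_self _),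
    Matrix.mul_one, Matrix.one_mul, Finset.sum_sub_distrib, ← sum_kronecker, ← kronecker_sum,
    sum_σp_mul_mul_σp, Finset.sum_const, Finset.card_univ, Fintype.card_fin]
  simp only [sub_kronecker, kronecker_sub, smul_kronecker, kronecker_smul, one_kronecker_one]
  module

theorem isHermitian_pauli_hamiltonian (h1 h2 : Fin 3 → ℝ) (J : Fin 3 → Fin 3 → ℝ) :
    (∑ a, (h1 a : ℂ) • (σp a ⊗ₖ (1 : Matrix (Fin 2) (Fin 2) ℂ))
      + ∑ a, (h2 a : ℂ) • ((1 : Matrix (Fin 2) (Fin 2) ℂ) ⊗ₖ σp a)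
      + ∑ a, ∑ b, (J a b : ℂ) • (σp a ⊗ₖ σp b)).IsHermitian := by
  have hreal : ∀ x : ℝ, IsSelfAdjoint (x : ℂ) := Complex.conj_ofReal
  exact ((isSelfAdjoint_sum _ fun a _ =>
      (hreal _).smul ((σp_isHermitian a).kronecker isHermitian_one)).add
    (isSelfAdjoint_sum _ fun a _ =>
      (hreal _).smul (isHermitian_one.kronecker (σp_isHermitian a)))).add
    (isSelfAdjoint_sum _ fun a _ => isSelfAdjoint_sum _ fun b _ =>
      (hreal _).smul ((σp_isHermitian a).kronecker (σp_isHermitian b)))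

-- The noise maps `Pc2 C` to `4 • 1 - 16 • Pc2 C`, and `4 • 1 = (4 / 9) • ∑ C', Pc2 C'`.
def depolarizingRate (C C' : Conf2) : ℝ := 4 / 9 - if C = C' then 16 else 0

theorem depolarizingRate_pos (C C' : Conf2) (h : C ≠ C') : 0 < depolarizingRate C C' := by
  rw [depolarizingRate, if_neg h]
  norm_num

theorem sum_depolarizingRate (C' : Conf2) : ∑ C, depolarizingRate C C' = 0 := by
  simp only [depolarizingRate, Finset.sum_sub_distrib, Finset.sum_ite_eq', Finset.mem_univ,
    if_true, Finset.sum_const, Finset.card_univ]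
  norm_num [show Fintype.card Conf2 = 36 from rfl]

theorem dissipator_Pc2 (C : Conf2) :
    ∑ a, Dcal (σp a ⊗ₖ (1 : Matrix (Fin 2) (Fin 2) ℂ)) (Pc2 C)
      + ∑ a, Dcal ((1 : Matrix (Fin 2) (Fin 2) ℂ) ⊗ₖ σp a) (Pc2 C)
      + ∑ a, ∑ b, Dcal (σp a ⊗ₖ σp b) (Pc2 C)
      = ∑ C', depolarizingRate C C' • Pc2 C' := by
  refine (dissipator_kronecker _ _).trans ?_
  simp only [depolarizingRate, sub_smul, Finset.sum_sub_distrib, ite_smul, zero_smul,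
    Finset.sum_ite_eq, Finset.mem_univ, if_true, ← Finset.smul_sum, sum_Pc2, trace_Pc,
    ← Complex.coe_smul, smul_smul]
  norm_num
  rfl

/-- **Universal noise.** For any two-qubit Hamiltonian built from single-site and
pairwise Pauli terms, there is a finite critical noise strength `γc ≥ 0` such that for
every `γ ≥ γc` the dynamics with uniform (depolarizing) two-site noise of strength `γ`
admits a decomposition over configuration projectors with nonnegative off-diagonal
rates and vanishing column sums. -/
theorem universal_noise_two_qubit
    (h1 h2 : Fin 3 → ℝ) (J : Fin 3 → Fin 3 → ℝ)
    (H : Matrix (Fin 2 × Fin 2) (Fin 2 × Fin 2) ℂ)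
    (hH : H = ∑ a : Fin 3, (h1 a : ℂ) • (σp a ⊗ₖ (1 : Matrix (Fin 2) (Fin 2) ℂ))
        + ∑ a : Fin 3, (h2 a : ℂ) • ((1 : Matrix (Fin 2) (Fin 2) ℂ) ⊗ₖ σp a)
        + ∑ a : Fin 3, ∑ b : Fin 3, (J a b : ℂ) • (σp a ⊗ₖ σp b)) :
    ∃ γc : ℝ, 0 ≤ γc ∧ ∀ γ : ℝ, γc ≤ γ →
      ∃ M : Conf2 → Conf2 → ℝ,
        (∀ C C', C ≠ C' → 0 ≤ M C C') ∧
        (∀ C', ∑ C : Conf2, M C C' = 0) ∧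
        (∀ C : Conf2,
          Complex.I • (H * Pc2 C - Pc2 C * H)
            + γ • (∑ a : Fin 3, Dcal (σp a ⊗ₖ (1 : Matrix (Fin 2) (Fin 2) ℂ)) (Pc2 C)
              + ∑ a : Fin 3, Dcal ((1 : Matrix (Fin 2) (Fin 2) ℂ) ⊗ₖ σp a) (Pc2 C)
              + ∑ a : Fin 3, ∑ b : Fin 3, Dcal (σp a ⊗ₖ σp b) (Pc2 C))
          = ∑ C' : Conf2, M C C' • Pc2 C') := by
  have hH_herm : H.IsHermitian := hH ▸ isHermitian_pauli_hamiltonian h1 h2 J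
  have hL : ∀ C, Complex.I • (H * Pc2 C - Pc2 C * H) ∈ Submodule.span ℝ (Set.range Pc2) :=
    fun C => (isHermitian_I_smul_commutator hH_herm (Pc2_isHermitian C)).mem_span_real
      Pc2_isHermitian span_range_Pc2_eq_top
  have hLsum : ∑ C, Complex.I • (H * Pc2 C - Pc2 C * H) = 0 := by
    rw [← Finset.smul_sum, Finset.sum_sub_distrib, ← Finset.mul_sum, ← Finset.sum_mul, sum_Pc2,
      mul_smul_comm, smul_mul_assoc, Matrix.mul_one, Matrix.one_mul, sub_self, smul_zero]
  obtain ⟨γc, hγc, hM⟩ := exists_rate_matrix hL hLsum depolarizingRate_pos sum_depolarizingRate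
  refine ⟨γc, hγc, fun γ hγ => ?_⟩
  obtain ⟨M, hMpos, hMsum, hMeq⟩ := hM γ hγ
  exact ⟨M, hMpos, hMsum, fun C => by rw [dissipator_Pc2]; exact hMeq C⟩
end
end

section
/- Order the four configurations C₁ = (+1,y), C₂ = (−1,y), C₃ = (+1,z), C₄ = (−1,z) and for real γ, τ define the 4×4 real matrix K(γ,τ) := !![−2γ, 0, γ+τ, γ−τ; 0, −2γ, γ−τ, γ+τ; γ−τ, γ+τ, −2γ, 0; γ+τ, γ−τ, 0, −2γ]. Then: (i) for all real τ, γ and every index j ∈ {1,2,3,4}, iτ(σ_x·P_{C_j} − P_{C_j}·σ_x) + γ(σ_x·P_{C_j}·σ_x − P_{C_j}) = Σ_{i=1}^{4} K(γ,τ)_{i,j} • P_{C_i}; and (ii) all off-diagonal entries of K(γ,τ) are nonnegative if and only if γ ≥ |τ|. -/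
open Matrix Kronecker Finset
open scoped Classical

noncomputable section

/-- The four configurations `C₁ = (+1,y)`, `C₂ = (−1,y)`, `C₃ = (+1,z)`, `C₄ = (−1,z)`. -/
def Cfour : Fin 4 → Conf1 := ![(0, 1), (1, 1), (0, 2), (1, 2)]

/-- The gauge-fixed single-qubit transition matrix `K(γ,τ)`. -/
def Kmat (γ τ : ℝ) : Matrix (Fin 4) (Fin 4) ℝ :=
  !![-(2 * γ), 0, γ + τ, γ - τ;
     0, -(2 * γ), γ - τ, γ + τ;
     γ - τ, γ + τ, -(2 * γ), 0;
     γ + τ, γ - τ, 0, -(2 * γ)]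

set_option maxHeartbeats 2000000 in
/-- (i) `K(γ,τ)` decomposes the single-qubit rotation-plus-dephasing dynamics over the
four projectors, and (ii) its off-diagonal entries are nonnegative iff `γ ≥ |τ|`. -/
theorem single_qubit_K_decomposition_and_positivity (γ τ : ℝ) :
    (∀ j : Fin 4,
      (Complex.I * (τ : ℂ)) • (σp 0 * Pc (Cfour j) - Pc (Cfour j) * σp 0)
        + γ • (σp 0 * Pc (Cfour j) * σp 0 - Pc (Cfour j))
      = ∑ i : Fin 4, Kmat γ τ i j • Pc (Cfour i)) ∧
    ((∀ i j : Fin 4, i ≠ j → 0 ≤ Kmat γ τ i j) ↔ |τ| ≤ γ) := by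
  constructor
  · intro j
    fin_cases j <;>
    · ext a b
      fin_cases a <;> fin_cases b <;>
        simp [σp, Pc, Pspin, sgn, Cfour, Kmat, Fin.sum_univ_four, Matrix.mul_apply,
          Matrix.vecMul, dotProduct, Matrix.one_apply, Matrix.smul_apply,
          Fin.sum_univ_two, Complex.ext_iff] <;> ring
  · constructor
    · intro h
      have h1 := h 0 2 (by decide)
      have h2 := h 0 3 (by decide)
      simp [Kmat] at h1 h2
      rcases abs_cases τ with ⟨he, _⟩ | ⟨he, _⟩ <;> rw [he] <;> linarith
    · intro h i j hij
      have := abs_nonneg τ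
      have h1 := neg_abs_le τ
      have h2 := le_abs_self τ
      fin_cases i <;> fin_cases j <;> simp_all [Kmat] <;> linarith
end
end

section
/- The set of real 6×6 matrices Λ, indexed by the single-qubit configurations C = (s,α) ∈ {+1,−1}×{x,y,z}, satisfying both (i) Σ_{C'} Λ_{C,C'} • P_{C'} = 0 (the zero 2×2 complex matrix) for every C, and (ii) Σ_C Λ_{C,C'} = 0 for every C', is an ℝ-linear subspace of dimension exactly 10. -/
open Matrix Kronecker Finset
open scoped Classical

noncomputable section

/-- Scalar characterization of a real combination of spin projectors vanishing. -/
lemma key (l : Conf1 → ℝ) :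
    (∑ C' : Conf1, l C' • Pc C' = (0 : Matrix (Fin 2) (Fin 2) ℂ)) ↔
    ((∀ α : Fin 3, l (0,α) = l (1,α)) ∧ ∑ C' : Conf1, l C' = 0) := by
  rw [Fintype.sum_prod_type (f := fun C' => l C')]
  simp only [Fin.sum_univ_two, Fin.sum_univ_three]
  constructor
  · intro h
    have he := Matrix.ext_iff.mpr h
    have he00 := he 0 0
    have he01 := he 0 1
    have he11 := he 1 1
    simp [Fintype.sum_prod_type, Fin.sum_univ_two, Fin.sum_univ_three, Pc, Pspin, σp, sgn,
      Matrix.one_apply, Complex.ext_iff] at he00 he01 he11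
    have hcase : ∀ α : Fin 3, α = 0 ∨ α = 1 ∨ α = 2 := by decide
    refine ⟨fun α => ?_, by linarith [he01.1, he01.2]⟩
    rcases hcase α with rfl | rfl | rfl <;> linarith [he01.1, he01.2]
  · rintro ⟨h1, h4⟩
    have h10 := h1 0
    have h11 := h1 1
    have h12 := h1 2
    have H4 := congrArg (fun r : ℝ => (r : ℂ)) h4
    have H10 := congrArg (fun r : ℝ => (r : ℂ)) h10
    have H11 := congrArg (fun r : ℝ => (r : ℂ)) h11
    have H12 := congrArg (fun r : ℝ => (r : ℂ)) h12
    push_cast at H4 H10 H11 H12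
    simp only [Prod.mk_zero_zero, Prod.mk_one_one] at H4 H10 H11 H12
    ext i j
    fin_cases i <;> fin_cases j <;>
      simp [Fintype.sum_prod_type, Fin.sum_univ_two, Fin.sum_univ_three, Pc, Pspin, σp, sgn,
        Matrix.one_apply]
    · linear_combination (2⁻¹ : ℂ) * H4 + (2⁻¹ : ℂ) * H12
    · linear_combination (2⁻¹ : ℂ) * H10 - (2⁻¹ : ℂ) * Complex.I * H11
    · linear_combination (2⁻¹ : ℂ) * H10 + (2⁻¹ : ℂ) * Complex.I * H11
    · linear_combination (2⁻¹ : ℂ) * H4 - (2⁻¹ : ℂ) * H12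

/-- Embedding of sign-independent coefficient tables into matrices over `Conf1`. -/
def Jmap : (Conf1 → Fin 3 → ℝ) →ₗ[ℝ] Matrix Conf1 Conf1 ℝ where
  toFun μ := Matrix.of fun C C' => μ C C'.2
  map_add' := by intros; rfl
  map_smul' := by intros; rfl

/-- The constraint map: row sums and the first two column sums. -/
def Gmap : (Conf1 → Fin 3 → ℝ) →ₗ[ℝ] (Conf1 → ℝ) × ℝ × ℝ where
  toFun μ := (fun C => ∑ α, μ C α, ∑ C, μ C 0, ∑ C, μ C 1)
  map_add' μ ν := by
    simp [Prod.ext_iff, funext_iff, Finset.sum_add_distrib]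
  map_smul' r μ := by
    simp [Prod.ext_iff, funext_iff, Finset.mul_sum]

lemma Jinj : Function.Injective Jmap := by
  intro μ ν h
  funext C α
  exact congrFun (congrFun h C) ((0 : Fin 2), α)

lemma Gsurj : Function.Surjective Gmap := by
  rintro ⟨f, v0, v1⟩
  refine ⟨fun C α => if C = (0 : Conf1) then
    ![v0, v1, f C - v0 - v1] α else ![0, 0, f C] α, ?_⟩
  simp only [Gmap, LinearMap.coe_mk, AddHom.coe_mk, Prod.mk.injEq]
  refine ⟨funext fun C => ?_, ?_, ?_⟩
  · by_cases hC : C = (0 : Conf1) <;>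
      simp [hC, Fin.sum_univ_three]
  · rw [Finset.sum_congr rfl (fun C _ => show _ = if C = (0 : Conf1) then v0 else 0 by
      by_cases hC : C = (0 : Conf1) <;> simp [hC])]
    simp
  · rw [Finset.sum_congr rfl (fun C _ => show _ = if C = (0 : Conf1) then v1 else 0 by
      by_cases hC : C = (0 : Conf1) <;> simp [hC])]
    simp

/-- The gauge transformations of the single-qubit Markov-matrix representation —
the real 6×6 matrices `Λ` with `Σ_{C'} Λ_{C,C'} • P_{C'} = 0` for every `C` and
`Σ_C Λ_{C,C'} = 0` for every `C'` — form an `ℝ`-linear subspace of dimension 10. -/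
theorem gauge_space_single_qubit_dim_ten :
    ∃ S : Submodule ℝ (Matrix Conf1 Conf1 ℝ),
      (∀ Λ : Matrix Conf1 Conf1 ℝ, Λ ∈ S ↔
        ((∀ C : Conf1, ∑ C' : Conf1, Λ C C' • Pc C' = (0 : Matrix (Fin 2) (Fin 2) ℂ)) ∧
         (∀ C' : Conf1, ∑ C : Conf1, Λ C C' = 0))) ∧
      Module.finrank ℝ S = 10 := by
  refine ⟨(LinearMap.ker Gmap).map Jmap, fun Λ => ?_, ?_⟩
  · rw [Submodule.mem_map]
    constructor
    · rintro ⟨μ, hμ, rfl⟩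
      simp only [SetLike.mem_coe, LinearMap.mem_ker, Gmap, LinearMap.coe_mk, AddHom.coe_mk,
        Prod.ext_iff, funext_iff, Prod.fst_zero, Prod.snd_zero, Pi.zero_apply] at hμ
      obtain ⟨hrow, h0, h1⟩ := hμ
      constructor
      · intro C
        refine (key _).mpr ⟨fun α => rfl, ?_⟩
        rw [Fintype.sum_prod_type]
        simp only [Fin.sum_univ_two]
        show (∑ α, μ C α) + (∑ α, μ C α) = 0
        rw [hrow C]; ring
      · rintro ⟨s, α⟩
        have hcase : α = 0 ∨ α = 1 ∨ α = 2 := by omega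
        show (∑ C : Conf1, μ C α) = 0
        rcases hcase with rfl | rfl | rfl
        · exact h0
        · exact h1
        · have e2 : (∑ C : Conf1, μ C 2) = ∑ C : Conf1, ((∑ β, μ C β) - μ C 0 - μ C 1) :=
            Finset.sum_congr rfl (fun C _ => by rw [Fin.sum_univ_three]; ring)
          rw [e2, Finset.sum_sub_distrib, Finset.sum_sub_distrib, h0, h1,
            Finset.sum_congr rfl (fun C _ => hrow C)]
          simp
    · rintro ⟨hi, hii⟩
      refine ⟨fun C α => Λ C (0, α), ?_, ?_⟩
      · simp only [SetLike.mem_coe, LinearMap.mem_ker, Gmap, LinearMap.coe_mk, AddHom.coe_mk,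
          Prod.ext_iff, funext_iff, Prod.fst_zero, Prod.snd_zero, Pi.zero_apply]
        refine ⟨fun C => ?_, hii (0, 0), hii (0, 1)⟩
        obtain ⟨heq, hsum⟩ := (key _).mp (hi C)
        rw [Fintype.sum_prod_type] at hsum
        simp only [Fin.sum_univ_two] at hsum
        have e : (∑ α, Λ C (1, α)) = ∑ α, Λ C (0, α) :=
          Finset.sum_congr rfl (fun α _ => (heq α).symm)
        rw [e] at hsum
        linarith
      · funext C C'
        obtain ⟨s, α⟩ := C'
        have hs : s = 0 ∨ s = 1 := by omega
        rcases hs with rfl | rfl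
        · rfl
        · exact ((key _).mp (hi C)).1 α
  · have e := Submodule.equivMapOfInjective Jmap Jinj (LinearMap.ker Gmap)
    rw [← LinearEquiv.finrank_eq e]
    have hrn := LinearMap.finrank_range_add_finrank_ker Gmap
    rw [LinearMap.range_eq_top.mpr Gsurj, finrank_top] at hrn
    have hdom : Module.finrank ℝ (Conf1 → Fin 3 → ℝ) = 18 := by
      simp [Module.finrank_pi_fintype]
    have hcod : Module.finrank ℝ ((Conf1 → ℝ) × ℝ × ℝ) = 8 := by
      simp [Module.finrank_prod, Module.finrank_pi, Module.finrank_self]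
    omega
end
end

section
/- The set of real 36×36 matrices Λ, indexed by the two-qubit configurations C = (s₁,α,s₂,β) ∈ ({+1,−1}×{x,y,z})², satisfying both (i) Σ_{C'} Λ_{C,C'} • P_{C'} = 0 (the zero 4×4 complex matrix) for every C, and (ii) Σ_C Λ_{C,C'} = 0 for every C', is an ℝ-linear subspace of dimension exactly 700. -/
open Matrix Kronecker Finset
open scoped Classical

noncomputable section

/-! The real span of the 36 projectors `Pc2 C` equals the span of the 16 Pauli strings
`σ_i ⊗ σ_j` (with `σ_0 = 1`): each projector `(1 ± σ_α)/2` is a combination of `1` and `σ_α`, and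
conversely `1 = P_{+,α} + P_{-,α}`, `σ_α = P_{+,α} - P_{-,α}`. The Pauli strings are orthogonal for
the trace form, hence independent, so the linear relations among the projectors form a space `K`
of dimension `36 - 16 = 20`. A gauge matrix is a choice of 36 rows in `K` summing to zero, and
these form a space of dimension `(36 - 1) * 20 = 700`. -/

section Gauge

variable {R ι κ : Type*} [Field R] [Fintype κ]

def gaugeSubmodule (K : Submodule R (ι → R)) : Submodule R (Matrix κ ι R) where
  carrier := {Λ | (∀ C, Λ C ∈ K) ∧ ∀ C', ∑ C, Λ C C' = 0}
  add_mem' {Λ Λ'} := fun ⟨hrow, hcol⟩ ⟨hrow', hcol'⟩ =>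
    ⟨fun C => K.add_mem (hrow C) (hrow' C), fun C' => by
      simp only [Matrix.add_apply, sum_add_distrib, hcol, hcol', add_zero]⟩
  zero_mem' := ⟨fun _ => K.zero_mem, fun _ => by simp⟩
  smul_mem' r Λ := fun ⟨hrow, hcol⟩ =>
    ⟨fun C => K.smul_mem r (hrow C), fun C' => by
      simp only [Matrix.smul_apply, smul_eq_mul, ← mul_sum, hcol, mul_zero]⟩

lemma finrank_ker_sum_proj {N : Type*} [AddCommGroup N] [Module R N] [FiniteDimensional R N]
    [Nonempty κ] :
    Module.finrank R (LinearMap.ker (∑ C : κ, LinearMap.proj C : (κ → N) →ₗ[R] N)) =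
      (Fintype.card κ - 1) * Module.finrank R N := by
  have hsurj : Function.Surjective (∑ C : κ, LinearMap.proj C : (κ → N) →ₗ[R] N) := fun x =>
    ⟨Pi.single (Classical.arbitrary κ) x, by simp⟩
  have h := LinearMap.finrank_range_add_finrank_ker (∑ C : κ, LinearMap.proj C : (κ → N) →ₗ[R] N)
  rw [LinearMap.range_eq_top.mpr hsurj, finrank_top, Module.finrank_pi_fintype, sum_const,
    card_univ, smul_eq_mul] at h
  rw [Nat.sub_mul, one_mul]
  omega

def gaugeSubmoduleEquiv (K : Submodule R (ι → R)) :
    gaugeSubmodule (κ := κ) K ≃ₗ[R] LinearMap.ker (∑ C : κ, LinearMap.proj C : (κ → K) →ₗ[R] K) where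
  toFun Λ := ⟨fun C => ⟨Λ.1 C, Λ.2.1 C⟩, by
    ext C'
    simp only [LinearMap.sum_apply, LinearMap.coe_proj, Function.eval,
      Submodule.coe_sum, ZeroMemClass.coe_zero, Pi.zero_apply]
    exact (sum_apply C' univ fun C => Λ.1 C).trans (Λ.2.2 C')⟩
  invFun f := ⟨fun C => f.1 C, fun C => (f.1 C).2, fun C' => by
    have := congrFun (congrArg Subtype.val (LinearMap.mem_ker.mp f.2)) C'
    simp only [LinearMap.sum_apply, LinearMap.coe_proj, Function.eval, Finset.sum_apply,
      Submodule.coe_sum, ZeroMemClass.coe_zero, Pi.zero_apply] at this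
    exact this⟩
  left_inv _ := rfl
  right_inv _ := rfl
  map_add' _ _ := rfl
  map_smul' _ _ := rfl

lemma finrank_gaugeSubmodule [Fintype ι] [Nonempty κ] (K : Submodule R (ι → R)) :
    Module.finrank R (gaugeSubmodule (κ := κ) K) = (Fintype.card κ - 1) * Module.finrank R K :=
  (gaugeSubmoduleEquiv K).finrank_eq.trans finrank_ker_sum_proj

end Gauge

lemma finrank_ker_linearCombination {R ι M : Type*} [Field R] [Fintype ι] [AddCommGroup M]
    [Module R M] (v : ι → M) :
    Module.finrank R (LinearMap.ker (Fintype.linearCombination R v)) =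
      Fintype.card ι - Module.finrank R (Submodule.span R (Set.range v)) := by
  have h := LinearMap.finrank_range_add_finrank_ker (Fintype.linearCombination R v)
  rw [Fintype.range_linearCombination, Module.finrank_fintype_fun_eq_card] at h
  omega

lemma Matrix.linearIndependent_of_trace_mul_eq_ite {K n ι : Type*} [Field K] [Fintype n]
    [Fintype ι] [DecidableEq ι] (u : ι → Matrix n n K) {c : K} (hc : c ≠ 0)
    (h : ∀ i j, trace (u i * u j) = if i = j then c else 0) : LinearIndependent K u := by
  rw [Fintype.linearIndependent_iff]
  intro g hg j
  have := congrArg (fun X => trace (X * u j)) hg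
  simp only [sum_mul, trace_sum, smul_mul_assoc, trace_smul, h, smul_eq_mul, mul_ite, mul_zero,
    sum_ite_eq', mem_univ, if_true, zero_mul, trace_zero] at this
  exact (mul_eq_zero.mp this).resolve_right hc

lemma Matrix.trace_kronecker_mul_kronecker {α l m : Type*} [CommSemiring α] [Fintype l]
    [Fintype m] (A A' : Matrix l l α) (B B' : Matrix m m α) :
    trace ((A ⊗ₖ B) * (A' ⊗ₖ B')) = trace (A * A') * trace (B * B') := by
  rw [← mul_kronecker_mul, trace_kronecker]

lemma Matrix.span_range_kronecker (R : Type*) {α ι₁ ι₂ l m n p : Type*} [CommSemiring R]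
    [Semiring α] [Algebra R α] (u : ι₁ → Matrix l m α) (w : ι₂ → Matrix n p α) :
    Submodule.span R (Set.range fun q : ι₁ × ι₂ => u q.1 ⊗ₖ w q.2) =
      Submodule.map₂ (kroneckerBilinear (R := R) (α := α)) (Submodule.span R (Set.range u))
        (Submodule.span R (Set.range w)) := by
  rw [Submodule.map₂_span_span, Set.image2_range]
  rfl

def pauli : Fin 4 → Matrix (Fin 2) (Fin 2) ℂ := ![1, σp 0, σp 1, σp 2]

lemma trace_pauli_mul_pauli (i j : Fin 4) :
    trace (pauli i * pauli j) = if i = j then 2 else 0 := by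
  fin_cases i <;> fin_cases j <;> norm_num [pauli, σp, trace_fin_two, cons_val_two]

lemma linearIndependent_pauli_kronecker_pauli :
    LinearIndependent ℝ fun q : Fin 4 × Fin 4 => pauli q.1 ⊗ₖ pauli q.2 := by
  refine .restrict_scalars' ℝ (linearIndependent_of_trace_mul_eq_ite _ (c := 4) (by norm_num) ?_)
  rintro ⟨i, i'⟩ ⟨j, j'⟩
  rw [trace_kronecker_mul_kronecker, trace_pauli_mul_pauli, trace_pauli_mul_pauli]
  simp only [Prod.mk.injEq]
  split_ifs <;> simp_all; norm_num

lemma pauli_succ (α : Fin 3) : pauli α.succ = σp α := by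
  fin_cases α <;> rfl

lemma Pc_eq_pauli (s : Fin 2) (α : Fin 3) :
    Pc (s, α) = (2⁻¹ : ℝ) • pauli 0 + (sgn s / 2 : ℝ) • pauli α.succ := by
  rw [pauli_succ, Pc, Pspin, smul_add, smul_smul, ← Complex.coe_smul, ← Complex.coe_smul]
  push_cast
  rw [mul_comm, ← div_eq_mul_inv]
  rfl

lemma pauli_zero_eq_Pc_add_Pc (α : Fin 3) : pauli 0 = Pc (0, α) + Pc (1, α) := by
  simp only [Pc_eq_pauli, sgn, cons_val_zero, cons_val_one, cons_val_fin_one]; module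

lemma pauli_succ_eq_Pc_sub_Pc (α : Fin 3) : pauli α.succ = Pc (0, α) - Pc (1, α) := by
  simp only [Pc_eq_pauli, sgn, cons_val_zero, cons_val_one, cons_val_fin_one]; module

lemma span_range_Pc : Submodule.span ℝ (Set.range Pc) = Submodule.span ℝ (Set.range pauli) := by
  apply le_antisymm <;> rw [Submodule.span_le]
  · rintro _ ⟨⟨s, α⟩, rfl⟩
    rw [Pc_eq_pauli]
    exact add_mem (Submodule.smul_mem _ _ (Submodule.subset_span ⟨0, rfl⟩))
      (Submodule.smul_mem _ _ (Submodule.subset_span ⟨_, rfl⟩))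
  · rintro _ ⟨i, rfl⟩
    cases i using Fin.cases with
    | zero =>
      rw [pauli_zero_eq_Pc_add_Pc 0]
      exact add_mem (Submodule.subset_span ⟨_, rfl⟩) (Submodule.subset_span ⟨_, rfl⟩)
    | succ α =>
      rw [pauli_succ_eq_Pc_sub_Pc]
      exact sub_mem (Submodule.subset_span ⟨_, rfl⟩) (Submodule.subset_span ⟨_, rfl⟩)

lemma finrank_span_range_Pc2 : Module.finrank ℝ (Submodule.span ℝ (Set.range Pc2)) = 16 := by
  have hPc2 : Pc2 = fun C : Conf2 => Pc C.1 ⊗ₖ Pc C.2 := rfl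
  rw [hPc2, span_range_kronecker, span_range_Pc, ← span_range_kronecker,
    finrank_span_eq_card linearIndependent_pauli_kronecker_pauli]
  simp

/-- The gauge transformations of the two-qubit Markov-matrix representation —
the real 36×36 matrices `Λ` with `Σ_{C'} Λ_{C,C'} • P_{C'} = 0` for every `C` and
`Σ_C Λ_{C,C'} = 0` for every `C'` — form an `ℝ`-linear subspace of dimension 700. -/
theorem gauge_space_two_qubit_dim_seven_hundred :
    ∃ S : Submodule ℝ (Matrix Conf2 Conf2 ℝ),
      (∀ Λ : Matrix Conf2 Conf2 ℝ, Λ ∈ S ↔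
        ((∀ C : Conf2, ∑ C' : Conf2, Λ C C' • Pc2 C'
            = (0 : Matrix (Fin 2 × Fin 2) (Fin 2 × Fin 2) ℂ)) ∧
         (∀ C' : Conf2, ∑ C : Conf2, Λ C C' = 0))) ∧
      Module.finrank ℝ S = 700 := by
  refine ⟨gaugeSubmodule (LinearMap.ker (Fintype.linearCombination ℝ Pc2)), fun Λ => Iff.rfl, ?_⟩
  rw [finrank_gaugeSubmodule, finrank_ker_linearCombination, finrank_span_range_Pc2]
  rfl
end
end

section
/- Let n ∈ ℕ and let M be a real n×n matrix whose diagonal satisfies M_{C,C} = −Σ_{C'≠C} M_{C',C} for every C. For C ≠ C' define M⁺_{C,C'} := max(M_{C,C'}, 0), M⁻_{C,C'} := max(−M_{C,C'}, 0), and V_C := 2·Σ_{C'≠C} M⁻_{C',C}. Suppose p•, p∘ : ℝ → (Fin n → ℝ) are differentiable and satisfy, for every C and t, d/dt p•_C = Σ_{C'≠C}( M⁺_{C,C'} p•_{C'} − M⁺_{C',C} p•_C + M⁻_{C,C'} p∘_{C'} − M⁻_{C',C} p•_C ) + V_C p•_C, and the same equation with • and ∘ interchanged. Then p := p• − p∘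 satisfies, for every C and t, d/dt p_C = Σ_{C'≠C}( M_{C,C'} p_{C'} − M_{C',C} p_C ), i.e. d/dt p = M p. -/
/-!
Split every rate into its positive and negative parts, `m = m⁺ - m⁻`. In the difference of the
particle and antiparticle equations the `M⁺` jumps act on `p• - p∘` directly, while the `M⁻`
jumps swap the two species and so act on it with the opposite sign, `-M⁻`. The loss terms
`-M⁻_{C',C} p_C` come out with the wrong sign, and the branching rate `V_C` restores exactly
twice that amount.
-/

open Finset

section

variable {α : Type*} [CommRing α] [LinearOrder α] [IsOrderedAddMonoid α]

lemma particle_sub_antiparticle_jump (a b x y x' y' : α) :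
    (max a 0 * x' - max b 0 * x + max (-a) 0 * y' - max (-b) 0 * x)
      - (max a 0 * y' - max b 0 * y + max (-a) 0 * x' - max (-b) 0 * y)
      + 2 * max (-b) 0 * (x - y)
      = a * (x' - y') - b * (x - y) := by
  linear_combination (x' - y') * posPart_sub_negPart a - (x - y) * posPart_sub_negPart b

lemma particle_sub_antiparticle_drift {ι : Type*} (s : Finset ι) (m m' : ι → α)
    (x y : α) (x' y' : ι → α) :
    ((∑ i ∈ s, (max (m i) 0 * x' i - max (m' i) 0 * x
        + max (-m i) 0 * y' i - max (-m' i) 0 * x))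
      + (2 * ∑ i ∈ s, max (-m' i) 0) * x)
    - ((∑ i ∈ s, (max (m i) 0 * y' i - max (m' i) 0 * y
        + max (-m i) 0 * x' i - max (-m' i) 0 * y))
      + (2 * ∑ i ∈ s, max (-m' i) 0) * y)
    = ∑ i ∈ s, (m i * (x' i - y' i) - m' i * (x - y)) := by
  simp only [← particle_sub_antiparticle_jump, sum_add_distrib, sum_sub_distrib, ← sum_mul,
    ← mul_sum]
  ring

end

theorem particle_antiparticle_reproduces_master_equation_general
    (n : ℕ) (M : Matrix (Fin n) (Fin n) ℝ)
    (pb pw : ℝ → Fin n → ℝ)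
    (hb : ∀ C t, HasDerivAt (fun u => pb u C)
      ((∑ C' ∈ univ.filter (· ≠ C),
        (max (M C C') 0 * pb t C' - max (M C' C) 0 * pb t C
          + max (-M C C') 0 * pw t C' - max (-M C' C) 0 * pb t C))
        + (2 * ∑ C' ∈ univ.filter (· ≠ C), max (-M C' C) 0) * pb t C) t)
    (hw : ∀ C t, HasDerivAt (fun u => pw u C)
      ((∑ C' ∈ univ.filter (· ≠ C),
        (max (M C C') 0 * pw t C' - max (M C' C) 0 * pw t C
          + max (-M C C') 0 * pb t C' - max (-M C' C) 0 * pw t C))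
        + (2 * ∑ C' ∈ univ.filter (· ≠ C), max (-M C' C) 0) * pw t C) t) :
    ∀ C t, HasDerivAt (fun u => pb u C - pw u C)
      (∑ C' ∈ univ.filter (· ≠ C),
        (M C C' * (pb t C' - pw t C') - M C' C * (pb t C - pw t C))) t := by
  intro C t
  rw [← particle_sub_antiparticle_drift]
  exact (hb C t).sub (hw C t)

/-- **The particle/antiparticle process reproduces the negative-rate master equation.**
Given a real `n×n` matrix `M` whose diagonal entries equal minus the corresponding
off-diagonal column sums, if `p•` and `p∘` solve the coupled particle/antiparticle
equations with the entirely positive rates `M⁺_{C,C'} = max(M_{C,C'},0)`,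
`M⁻_{C,C'} = max(−M_{C,C'},0)` and branching rates `V_C = 2 Σ_{C'≠C} M⁻_{C',C}`, then
`p = p• − p∘` solves the original master equation `d/dt p = M p`. -/
theorem particle_antiparticle_reproduces_master_equation
    (n : ℕ) (M : Matrix (Fin n) (Fin n) ℝ)
    (hdiag : ∀ C, M C C = -∑ C' ∈ univ.filter (· ≠ C), M C' C)
    (pb pw : ℝ → Fin n → ℝ)
    (hb : ∀ C t, HasDerivAt (fun u => pb u C)
      ((∑ C' ∈ univ.filter (· ≠ C),
        (max (M C C') 0 * pb t C' - max (M C' C) 0 * pb t C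
          + max (-M C C') 0 * pw t C' - max (-M C' C) 0 * pb t C))
        + (2 * ∑ C' ∈ univ.filter (· ≠ C), max (-M C' C) 0) * pb t C) t)
    (hw : ∀ C t, HasDerivAt (fun u => pw u C)
      ((∑ C' ∈ univ.filter (· ≠ C),
        (max (M C C') 0 * pw t C' - max (M C' C) 0 * pw t C
          + max (-M C C') 0 * pb t C' - max (-M C' C) 0 * pw t C))
        + (2 * ∑ C' ∈ univ.filter (· ≠ C), max (-M C' C) 0) * pw t C) t) :
    ∀ C t, HasDerivAt (fun u => pb u C - pw u C)
      (∑ C' ∈ univ.filter (· ≠ C),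
        (M C C' * (pb t C' - pw t C') - M C' C * (pb t C - pw t C))) t :=
  particle_antiparticle_reproduces_master_equation_general n M pb pw hb hw
end

section
/- For every a ∈ {x,y,z} and all real τ, γ with γ ≥ |τ|, there exists a real 6×6 matrix M, indexed by the single-qubit configurations, with M_{C,C'} ≥ 0 for all C ≠ C' and Σ_C M_{C,C'} = 0 for every C', such that for every configuration C: iτ(σ_a·P_C − P_C·σ_a) + γ(σ_a·P_C·σ_a − P_C) = Σ_{C'} M_{C,C'} • P_{C'}. -/
open Matrix Kronecker Finset
open scoped Classical

noncomputable section

/-- Levi-Civita symbol on `Fin 3`. -/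
def eps3 : Fin 3 → Fin 3 → Fin 3 → ℝ :=
  ![![![0,0,0], ![0,0,1], ![0,-1,0]],
    ![![0,0,-1], ![0,0,0], ![1,0,0]],
    ![![0,1,0], ![-1,0,0], ![0,0,0]]]

/-- The explicit rate matrix. -/
def Mmat (a : Fin 3) (τ γ : ℝ) : Conf1 → Conf1 → ℝ := fun C C' =>
  if C.2 = a ∨ C'.2 = a then 0
  else if C'.2 = C.2 then (if C'.1 = C.1 then -γ - |τ| else γ - |τ|)
  else |τ| - sgn C'.1 * τ * sgn C.1 * eps3 a C.2 C'.2

set_option maxHeartbeats 4000000 in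
/-- **Single-site classicalization.** For unitary rotation about axis `a` of strength
`τ` together with dephasing along `a` of strength `γ ≥ |τ|`, there is a matrix `M` on
the 6 single-qubit configurations with nonnegative off-diagonal entries and vanishing
column sums decomposing the dynamics over the spin projectors. -/
theorem single_site_classicalization (a : Fin 3) (τ γ : ℝ) (h : |τ| ≤ γ) :
    ∃ M : Conf1 → Conf1 → ℝ,
      (∀ C C', C ≠ C' → 0 ≤ M C C') ∧
      (∀ C', ∑ C : Conf1, M C C' = 0) ∧
      (∀ C : Conf1,
        (Complex.I * (τ : ℂ)) • (σp a * Pc C - Pc C * σp a)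
          + γ • (σp a * Pc C * σp a - Pc C)
        = ∑ C' : Conf1, M C C' • Pc C') := by
  refine ⟨Mmat a τ γ, ?_, ?_, ?_⟩
  · intro C C' hne
    have h1 := abs_nonneg τ; have h2 := le_abs_self τ; have h3 := neg_abs_le τ
    fin_cases a <;> fin_cases C <;> fin_cases C' <;>
      simp_all [Mmat, sgn, eps3] <;> linarith
  · intro C'
    fin_cases a <;> fin_cases C' <;>
      simp [Fintype.sum_prod_type, Fin.sum_univ_succ, Mmat, sgn, eps3] <;> ring
  · intro C
    fin_cases a <;> fin_cases C <;>
      · rw [show (univ : Finset Conf1) = {(0,0),(0,1),(0,2),(1,0),(1,1),(1,2)} by decide]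
        rw [Finset.sum_insert (by decide), Finset.sum_insert (by decide),
          Finset.sum_insert (by decide), Finset.sum_insert (by decide),
          Finset.sum_insert (by decide), Finset.sum_singleton]
        simp only [Mmat, Pc, Pspin, σp, sgn, eps3]
        norm_num
        ext i j
        fin_cases i <;> fin_cases j <;>
          simp [Matrix.one_fin_two, Matrix.mul_apply, Fin.sum_univ_two,
            Complex.ext_iff]
        all_goals try ring
        all_goals exact ⟨trivial, trivial⟩
end
end
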